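/- arXiv:2312.02952 — 6 statements merged into one kernel-verified Lean document; each statement's English description precedes it below -/
import Mathlib

section
/- Let g : [1,∞) → [0,1) be differentiable satisfying g(t) = 1 - e^{-g(t)·t} with g(1)=0 and g(t)>0 for t>1. Then for t>1, ∫₁^t g(τ)² dτ = -2g(t) - (2-g(t))·ln(1-g(t)). -/
/-!
With `Φ u = -2u - (2 - u) log (1 - u)` one has `Φ' u = u / (1 - u) + log (1 - u)`. Along the
curve, `log (1 - g) = -g t`, and differentiating the implicit equation gives
`g' (1 - (1 - g) t) = g (1 - g)`; hence `(Φ ∘ g)' = g g' (1 - (1 - g) t) / (1 - g) = g²`.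
Since `Φ (g 1) = Φ 0 = 0`, the fundamental theorem of calculus gives the identity.
-/

open Real Set Filter Topology

noncomputable def giantPrimitive (u : ℝ) : ℝ := -2 * u - (2 - u) * log (1 - u)

lemma hasDerivAt_giantPrimitive {u : ℝ} (hu : u < 1) :
    HasDerivAt giantPrimitive (u / (1 - u) + log (1 - u)) u := by
  have hu' : 1 - u ≠ 0 := (sub_pos.2 hu).ne'
  have hlog : HasDerivAt (fun v => log (1 - v)) (-1 / (1 - u)) u := by
    simpa using ((hasDerivAt_id u).const_sub 1).log hu'
  have h : HasDerivAt (fun v => -2 * v - (2 - v) * log (1 - v))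
      (-2 * 1 - (-1 * log (1 - u) + (2 - u) * (-1 / (1 - u)))) u :=
    ((hasDerivAt_id' u).const_mul (-2)).sub (((hasDerivAt_id' u).const_sub 2).mul hlog)
  refine h.congr_deriv ?_
  field_simp
  ring

lemma mul_one_sub_mul_eq_of_hasDerivAt {g : ℝ → ℝ} {d x : ℝ} (hd : HasDerivAt g d x)
    (himp : ∀ᶠ y in 𝓝 x, g y = 1 - exp (-g y * y)) :
    d * (1 - (1 - g x) * x) = g x * (1 - g x) := by
  have hexp : exp (-g x * x) = 1 - g x := by linarith [himp.self_of_nhds]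
  have hd' : HasDerivAt g (-(exp (-g x * x) * (-d * x + -g x * 1))) x :=
    (((hd.neg.mul (hasDerivAt_id x)).exp).const_sub 1).congr_of_eventuallyEq himp
  have hd_eq := hd.unique hd'
  rw [hexp] at hd_eq
  linear_combination hd_eq

lemma hasDerivAt_giantPrimitive_comp {g : ℝ → ℝ} {x : ℝ} (hg : DifferentiableAt ℝ g x)
    (himp : ∀ᶠ y in 𝓝 x, g y = 1 - exp (-g y * y)) (hlt : g x < 1) :
    HasDerivAt (giantPrimitive ∘ g) (g x ^ 2) x := by
  have hd := hg.hasDerivAt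
  have hrel := mul_one_sub_mul_eq_of_hasDerivAt hd himp
  have hlog : log (1 - g x) = -g x * x := by
    rw [show 1 - g x = exp (-g x * x) by linarith [himp.self_of_nhds], log_exp]
  have hne : 1 - g x ≠ 0 := (sub_pos.2 hlt).ne'
  refine ((hasDerivAt_giantPrimitive hlt).comp x hd).congr_deriv ?_
  rw [hlog]
  field_simp
  linear_combination g x * hrel

theorem stmt_1_general (g : ℝ → ℝ) (hdiff : ∀ t ≥ 1, DifferentiableAt ℝ g t)
    (hrange : ∀ t ≥ 1, 0 ≤ g t ∧ g t < 1)
    (himp : ∀ t ≥ 1, g t = 1 - Real.exp (-(g t) * t))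
    (h1 : g 1 = 0) :
    ∀ t > 1, ∫ τ in (1:ℝ)..t, (g τ) ^ 2 =
      -2 * g t - (2 - g t) * Real.log (1 - g t) := by
  intro t ht
  have hcont : ∀ y ∈ Icc 1 t, ContinuousAt (giantPrimitive ∘ g) y := fun y hy =>
    (hasDerivAt_giantPrimitive (hrange y hy.1).2).continuousAt.comp (hdiff y hy.1).continuousAt
  have hderiv : ∀ x ∈ Ioo 1 t, HasDerivAt (giantPrimitive ∘ g) (g x ^ 2) x := fun x hx =>
    hasDerivAt_giantPrimitive_comp (hdiff x hx.1.le)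
      (eventually_gt_nhds hx.1 |>.mono fun y hy => himp y hy.le) (hrange x hx.1.le).2
  have hint : IntervalIntegrable (fun τ => g τ ^ 2) MeasureTheory.volume 1 t :=
    ContinuousOn.intervalIntegrable fun y hy =>
      ((hdiff y (by simpa [ht.le] using hy.1)).continuousAt.pow 2).continuousWithinAt
  rw [intervalIntegral.integral_eq_sub_of_hasDerivAt_of_le ht.le
    (fun y hy => (hcont y hy).continuousWithinAt) hderiv hint]
  simp [giantPrimitive, h1]

theorem stmt_1 (g : ℝ → ℝ) (hdiff : ∀ t ≥ 1, DifferentiableAt ℝ g t)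
    (hrange : ∀ t ≥ 1, 0 ≤ g t ∧ g t < 1)
    (himp : ∀ t ≥ 1, g t = 1 - Real.exp (-(g t) * t))
    (h1 : g 1 = 0) (hpos : ∀ t > 1, g t > 0) :
    ∀ t > 1, ∫ τ in (1:ℝ)..t, (g τ) ^ 2 =
      -2 * g t - (2 - g t) * Real.log (1 - g t) :=
  stmt_1_general g hdiff hrange himp h1
end

section
/- The function c_k(t) = k^{k-2}/k! · t^{k-1} · e^{-kt} (for k ≥ 1, t ≥ 0) satisfies the Smoluchowski equations dc_k/dt = (1/2)·Σ_{i+j=k} i·j·c_i·c_j − k·c_k with initial condition c_k(0) = δ_{k,1}. -/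
/-!
Since `i * c_i(t) = i^(i-1) / i! * t^(i-1) * e^(-i t)`, the quadratic term of the equation for `c_k`
is `t^(k-2) e^(-k t) / k!` times `∑_{0<i<k} C(k,i) i^(i-1) (k-i)^(k-i-1)`, and the equations
reduce to the identity `∑_{0<i<n} C(n,i) i^(i-1) (n-i)^(n-i-1) = 2 (n-1) n^(n-2)`.
Writing `n = i + (n-i)` and using the symmetry `i ↔ n-i`, `n` times this sum is
`2 ∑_{0<i<n} C(n,i) i^(i-1) (n-i)^(n-i) = 2 (n^n - n^(n-1))`, which is the `x`-derivative at
`x = 0` of Abel's identity `∑_k C(n,k) x (x+k)^(k-1) (z-k)^(n-k) = (x+z)^n` at `z = n`.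
Abel's identity follows by induction on `n`: in `z`, both sides of the case `n+1` have derivative
`n+1` times the case `n`, and both vanish at `z = -x`, where the left side is `x` times an
`(n+1)`-st finite difference of a polynomial of degree `n`.
-/

open Real Finset

noncomputable def crgDensity (k : ℕ) (t : ℝ) : ℝ :=
  (k : ℝ) ^ (k - 2) / (Nat.factorial k) * t ^ (k - 1) * Real.exp (-(k : ℝ) * t)

theorem sum_alternating_choose_mul_add_pow_eq_zero {R : Type*} [CommRing R] {j n : ℕ}
    (h : j < n) (x : R) :
    ∑ k ∈ range (n + 1), (-1) ^ (n - k) * (n.choose k : R) * (x + k) ^ j = 0 := by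
  have := fwdDiff_iter_eq_sum_shift (1 : R) (fun r ↦ r ^ j) n x
  rw [fwdDiff_iter_pow_eq_zero_of_lt h] at this
  simpa [zsmul_eq_mul] using this.symm

-- The `k = 0` term of Abel's sum is split off as `z ^ n`, since `x * (x + 0) ^ (0 - 1) = x`.
noncomputable def abelSum (n : ℕ) (x z : ℝ) : ℝ :=
  z ^ n + ∑ k ∈ Ioc 0 n, (n.choose k : ℝ) * (x * (x + k) ^ (k - 1)) * (z - k) ^ (n - k)

theorem hasDerivAt_abelSum_succ (n : ℕ) (x z : ℝ) :
    HasDerivAt (abelSum (n + 1) x) ((n + 1) * abelSum n x z) z := by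
  have hterm (k : ℕ) : HasDerivAt
      (fun z ↦ ((n + 1).choose k : ℝ) * (x * (x + k) ^ (k - 1)) * (z - k) ^ (n + 1 - k))
      ((n + 1) * ((n.choose k : ℝ) * (x * (x + k) ^ (k - 1)) * (z - k) ^ (n - k))) z := by
    refine ((((hasDerivAt_id z).sub_const (k : ℝ)).fun_pow (n + 1 - k)).const_mul
      (((n + 1).choose k : ℝ) * (x * (x + k) ^ (k - 1)))).congr_deriv ?_
    have hchoose : (n.choose k : ℝ) * (n + 1) = (n + 1).choose k * (n + 1 - k : ℕ) := by
      exact_mod_cast Nat.choose_mul_succ_eq n k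
    rw [Nat.sub_right_comm, Nat.add_sub_cancel, id]
    linear_combination -(x * (x + k) ^ (k - 1) * (z - k) ^ (n - k)) * hchoose
  refine ((hasDerivAt_pow (n + 1) z).add
    (HasDerivAt.fun_sum (u := Ioc 0 (n + 1)) fun k _ ↦ hterm k)).congr_deriv ?_
  rw [abelSum, Nat.cast_add_one, sum_Ioc_succ_top (Nat.zero_le n), Nat.choose_succ_self,
    Nat.cast_zero, zero_mul, zero_mul, mul_zero, add_zero, ← mul_sum, mul_add]
  rfl

theorem abelSum_succ_neg (n : ℕ) (x : ℝ) : abelSum (n + 1) x (-x) = 0 := by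
  have halt := sum_alternating_choose_mul_add_pow_eq_zero (Nat.lt_add_one n) x
  rw [range_eq_Ico, sum_eq_sum_Ico_succ_bot (Nat.succ_pos _), Nat.succ_eq_add_one,
    Ico_add_one_add_one_eq_Ioc] at halt
  rw [abelSum, ← mul_eq_zero_of_right x halt, mul_add, mul_sum]
  congr 1
  · simp only [Nat.sub_zero, Nat.choose_zero_right, Nat.cast_zero, add_zero, Nat.cast_one, mul_one]
    ring
  · refine sum_congr rfl fun k hk ↦ ?_
    obtain ⟨hk0, hkn⟩ := mem_Ioc.mp hk
    have hpow : (x + k) ^ (k - 1) * (x + k) ^ (n + 1 - k) = (x + k) ^ n := by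
      rw [← pow_add]; congr 1; omega
    rw [show -x - k = -(x + k) by ring, neg_pow, ← hpow]
    ring

theorem abelSum_eq (n : ℕ) (x z : ℝ) : abelSum n x z = (x + z) ^ n := by
  induction n generalizing z with
  | zero => simp [abelSum]
  | succ n ih =>
    have hpow (z : ℝ) : HasDerivAt (fun z ↦ (x + z) ^ (n + 1)) ((n + 1) * (x + z) ^ n) z := by
      simpa using ((hasDerivAt_id z).const_add x).fun_pow (n + 1)
    have hderiv (z : ℝ) : HasDerivAt (abelSum (n + 1) x) ((n + 1) * (x + z) ^ n) z := by
      simpa [ih] using hasDerivAt_abelSum_succ n x z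
    refine congrFun (eq_of_fderiv_eq (fun z ↦ (hderiv z).differentiableAt)
      (fun z ↦ (hpow z).differentiableAt)
      (fun z ↦ (hderiv z).hasFDerivAt.fderiv.trans (hpow z).hasFDerivAt.fderiv.symm) (-x) ?_) z
    simp [abelSum_succ_neg]

theorem hasDerivAt_mul_add_pow_zero (a : ℝ) (m : ℕ) :
    HasDerivAt (fun x ↦ x * (x + a) ^ m) (a ^ m) 0 :=
  ((hasDerivAt_id 0).fun_mul (((hasDerivAt_id 0).add_const a).fun_pow m)).congr_deriv (by simp)

theorem sum_Ioc_choose_mul_pow_mul_sub_pow (n : ℕ) (z : ℝ) :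
    ∑ k ∈ Ioc 0 n, (n.choose k : ℝ) * k ^ (k - 1) * (z - k) ^ (n - k) = n * z ^ (n - 1) := by
  have habel : HasDerivAt (fun x ↦ abelSum n x z)
      (∑ k ∈ Ioc 0 n, (n.choose k : ℝ) * k ^ (k - 1) * (z - k) ^ (n - k)) 0 :=
    ((hasDerivAt_const 0 (z ^ n)).add (HasDerivAt.fun_sum (u := Ioc 0 n) fun k _ ↦
      ((hasDerivAt_mul_add_pow_zero k (k - 1)).const_mul _).mul_const _)).congr_deriv (by simp)
  have hpow : HasDerivAt (fun x ↦ (x + z) ^ n) (n * z ^ (n - 1)) 0 := by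
    simpa using ((hasDerivAt_id (0 : ℝ)).add_const z).fun_pow n
  simp only [abelSum_eq] at habel
  exact habel.unique hpow

theorem sum_Ioo_choose_mul_pow_mul_pow_add (n : ℕ) :
    ∑ i ∈ Ioo 0 n, n.choose i * i ^ (i - 1) * (n - i) ^ (n - i) + n ^ (n - 1) = n ^ n := by
  obtain _ | m := n
  · rfl
  have h := sum_Ioc_choose_mul_pow_mul_sub_pow (m + 1) ((m + 1 : ℕ) : ℝ)
  rw [sum_Ioc_succ_top (Nat.zero_le m), sum_congr rfl fun k hk ↦ by
    rw [← Nat.cast_sub (Nat.le_succ_of_le (mem_Ioc.mp hk).2)], Nat.choose_self, sub_self,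
    Nat.sub_self, pow_zero, mul_one, Nat.cast_one, one_mul, Nat.add_sub_cancel, ← pow_succ'] at h
  rw [Ioo_add_one_right_eq_Ioc]
  exact_mod_cast h

theorem sum_Ioo_choose_mul_pow_mul_pow_sub_one (n : ℕ) :
    ∑ i ∈ Ioo 0 n, n.choose i * i ^ (i - 1) * (n - i) ^ (n - i - 1) =
      2 * (n - 1) * n ^ (n - 2) := by
  obtain _ | _ | m := n
  · rfl
  · rfl
  set T := ∑ i ∈ Ioo 0 (m + 2), (m + 2).choose i * i ^ (i - 1) * (m + 2 - i) ^ (m + 2 - i)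
  have hT : T + (m + 2) ^ (m + 1) = (m + 2) ^ (m + 2) := sum_Ioo_choose_mul_pow_mul_pow_add (m + 2)
  have hreflect : ∑ i ∈ Ioo 0 (m + 2), (m + 2).choose i * i ^ i * (m + 2 - i) ^ (m + 2 - i - 1)
      = T := by
    have hmaps : ∀ i ∈ Ioo 0 (m + 2), m + 2 - i ∈ Ioo 0 (m + 2) := by
      simp only [mem_Ioo]; omega
    have hinv : ∀ i ∈ Ioo 0 (m + 2), m + 2 - (m + 2 - i) = i := by
      simp only [mem_Ioo]; omega
    refine sum_nbij' _ _ hmaps hmaps hinv hinv fun i hi ↦ ?_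
    rw [← Nat.choose_symm (mem_Ioo.mp hi).2.le, hinv i hi]
    ring
  have hsplit : (m + 2) * ∑ i ∈ Ioo 0 (m + 2),
      (m + 2).choose i * i ^ (i - 1) * (m + 2 - i) ^ (m + 2 - i - 1) = 2 * T := by
    nth_rw 1 [two_mul, ← hreflect]
    rw [mul_sum, ← sum_add_distrib]
    refine sum_congr rfl fun i hi ↦ ?_
    obtain ⟨a, rfl⟩ : ∃ a, i = a + 1 := ⟨i - 1, by grind⟩
    obtain ⟨b, hb⟩ : ∃ b, m + 2 - (a + 1) = b + 1 := ⟨m - a, by grind⟩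
    have hm : m + 2 = a + b + 2 := by omega
    simp only [hb, Nat.add_sub_cancel]
    rw [hm]
    ring
  refine Nat.eq_of_mul_eq_mul_left (by omega : 0 < m + 2) (hsplit.trans ?_)
  have hpow : (m + 2) ^ (m + 2) = (m + 2) ^ (m + 1) + (m + 1) * ((m + 2) * (m + 2) ^ m) := by ring
  rw [hpow, add_comm T, Nat.add_left_cancel_iff] at hT
  show 2 * T = (m + 2) * (2 * (m + 1) * (m + 2) ^ m)
  rw [hT]
  ring

theorem natCast_mul_crgDensity {k : ℕ} (hk : 0 < k) (t : ℝ) :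
    k * crgDensity k t = k ^ (k - 1) / k.factorial * t ^ (k - 1) * exp (-k * t) := by
  have hpow : (k : ℝ) * k ^ (k - 2) = k ^ (k - 1) := by
    obtain rfl | hk2 := Nat.lt_iff_add_one_le.mp hk |>.eq_or_lt
    · norm_num
    · rw [← pow_succ']; congr 1; omega
  rw [crgDensity, ← hpow]
  ring

theorem mul_mul_crgDensity_mul_crgDensity {i j : ℕ} (hi : 0 < i) (hj : 0 < j) (t : ℝ) :
    i * j * crgDensity i t * crgDensity j t = (i + j).choose i * i ^ (i - 1) * j ^ (j - 1) *
      (t ^ (i + j - 2) * exp (-(i + j : ℕ) * t) / (i + j).factorial) := by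
  have hfact : ((i + j).factorial : ℝ) = (i + j).choose i * i.factorial * j.factorial := by
    rw [Nat.choose_symm_add]
    exact_mod_cast (Nat.add_choose_mul_factorial_mul_factorial i j).symm
  have htpow : t ^ (i + j - 2) = t ^ (i - 1) * t ^ (j - 1) := by
    rw [← pow_add]; congr 1; omega
  have hchoose : ((i + j).choose i : ℝ) ≠ 0 :=
    Nat.cast_ne_zero.mpr (Nat.choose_pos (Nat.le_add_right i j)).ne'
  rw [mul_right_comm (i : ℝ), mul_assoc _ (j : ℝ), natCast_mul_crgDensity hi,
    natCast_mul_crgDensity hj, hfact, htpow]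
  push_cast
  rw [neg_add, add_mul, exp_add]
  field_simp

theorem hasDerivAt_crgDensity (k : ℕ) (t : ℝ) :
    HasDerivAt (crgDensity k)
      (k ^ (k - 2) / k.factorial * (((k - 1 : ℕ) : ℝ) * t ^ (k - 2) - k * t ^ (k - 1)) *
        exp (-k * t)) t := by
  have hexp : HasDerivAt (fun t ↦ exp (-k * t)) (exp (-k * t) * -k) t := by
    simpa using ((hasDerivAt_id t).const_mul (-k : ℝ)).exp
  refine (((hasDerivAt_pow (k - 1) t).const_mul _).fun_mul hexp).congr_deriv ?_
  rw [Nat.sub_sub]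
  ring

theorem crgDensity_zero {k : ℕ} (hk : 1 ≤ k) : crgDensity k 0 = if k = 1 then 1 else 0 := by
  obtain rfl | hk := hk.eq_or_lt
  · simp [crgDensity]
  · simp [crgDensity, hk.ne', Nat.sub_ne_zero_of_lt hk]

theorem stmt_2 :
    (∀ k ≥ 1, ∀ t : ℝ,
      HasDerivAt (crgDensity k)
        ((1 / 2) * ∑ i ∈ Finset.Ioo 0 k,
            (i : ℝ) * ((k - i : ℕ) : ℝ) * crgDensity i t * crgDensity (k - i) t
          - (k : ℝ) * crgDensity k t) t) ∧
    (∀ k ≥ 1, crgDensity k 0 = if k = 1 then 1 else 0) := by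
  refine ⟨fun k _ t ↦ (hasDerivAt_crgDensity k t).congr_deriv ?_,
    fun k hk ↦ crgDensity_zero hk⟩
  have hsum := sum_Ioo_choose_mul_pow_mul_pow_sub_one k
  rw [sum_congr rfl fun i hi ↦ by
    obtain ⟨hi0, hik⟩ := mem_Ioo.mp hi
    rw [mul_mul_crgDensity_mul_crgDensity hi0 (Nat.sub_pos_of_lt hik), Nat.add_sub_of_le hik.le],
    ← sum_mul]
  rw [show ∑ i ∈ Ioo 0 k, (k.choose i : ℝ) * i ^ (i - 1) * ((k - i : ℕ) : ℝ) ^ (k - i - 1)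
    = 2 * ((k - 1 : ℕ) : ℝ) * (k : ℝ) ^ (k - 2) by exact_mod_cast hsum]
  unfold crgDensity
  ring
end

section
/- For t in (0,1), the second moment Σ_{k≥1} k²·(k^{k-2}/k!)·t^{k-1}·e^{-kt} equals 1/(1−t). -/
/-!
Write `k = m + 1`, so that the `k`-th term is `c m * t ^ m * exp (-(m + 1) t)` with
`c m = (m + 1) ^ (m + 1) / (m + 1)!`. Expanding each exponential and regrouping by total degree,
which is legitimate for small complex `z` by absolute convergence, the coefficient of `z ^ n` is
`(1 / (n + 1)!) ∑ₖ (-1) ^ (n + 1 - k) (n + 1).choose k * k ^ (n + 1)`, the `(n + 1)`-st forward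
difference of `x ↦ x ^ (n + 1)`, which is `1`. Hence the series is the geometric series near `0`.
It converges locally uniformly on a star-shaped domain containing `[0, 1)`, so the identity
theorem extends `∑ = (1 - z)⁻¹` from a neighbourhood of `0` to all of `[0, 1)`.
-/

open Finset Filter Topology
open scoped Nat fwdDiff

theorem sum_antidiagonal_neg_one_pow_mul_pow_div_factorial {K : Type*} [Field K] [CharZero K]
    (n : ℕ) : ∑ p ∈ antidiagonal n, (-1 : K) ^ p.2 * (p.1 : K) ^ n / (p.1 ! * p.2 !) = 1 := by
  have hdiff := fwdDiff_iter_eq_sum_shift (h := (1 : K)) (fun r ↦ r ^ n) n 0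
  rw [fwdDiff_iter_eq_factorial] at hdiff
  rw [Nat.sum_antidiagonal_eq_sum_range_succ (fun i j ↦ (-1 : K) ^ j * (i : K) ^ n / (i ! * j !)),
    ← mul_left_inj' (Nat.cast_ne_zero.mpr n.factorial_ne_zero), one_mul, sum_mul]
  convert hdiff.symm using 1
  · refine sum_congr rfl fun k hk ↦ ?_
    simp only [zsmul_eq_mul, zero_add, nsmul_eq_mul, mul_one]
    push_cast
    rw [Nat.cast_choose K (Nat.le_of_lt_succ (mem_range.mp hk))]
    field_simp
  · simp

theorem HasSum.sum_antidiagonal {A α : Type*} [AddCommMonoid A] [HasAntidiagonal A]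
    [AddCommMonoid α] [TopologicalSpace α] [ContinuousAdd α] [RegularSpace α]
    {f : A × A → α} {a : α} (h : HasSum f a) :
    HasSum (fun n ↦ ∑ p ∈ antidiagonal n, f p) a :=
  (HasAntidiagonal.sigmaAntidiagonalEquivProd.hasSum_iff.mpr h).sigma
    fun n ↦ (antidiagonal n).hasSum f

noncomputable def treeCoeff (m : ℕ) : ℝ := (m + 1 : ℝ) ^ (m + 1) / (m + 1)!

/-- `treeTerm m z = k ^ 2 * c_k(z)` for `k = m + 1`. -/
noncomputable def treeTerm (m : ℕ) (z : ℂ) : ℂ :=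
  treeCoeff m * z ^ m * Complex.exp (-(m + 1) * z)

theorem treeCoeff_nonneg (m : ℕ) : 0 ≤ treeCoeff m := by
  unfold treeCoeff
  positivity

theorem treeCoeff_le_exp (m : ℕ) : treeCoeff m ≤ Real.exp (m + 1) := by
  simpa [treeCoeff] using Real.pow_div_factorial_le_exp (x := (m + 1 : ℝ)) (by positivity) (m + 1)

theorem sum_antidiagonal_treeCoeff (n : ℕ) :
    ∑ p ∈ antidiagonal n, (treeCoeff p.1 : ℂ) * (-(p.1 + 1 : ℂ)) ^ p.2 / p.2 ! = 1 := by
  have h := sum_antidiagonal_neg_one_pow_mul_pow_div_factorial (K := ℂ) (n + 1)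
  rw [Nat.sum_antidiagonal_succ] at h
  simp only [CharP.cast_eq_zero, ne_eq, Nat.add_eq_zero_iff, one_ne_zero, and_false,
    not_false_eq_true, zero_pow, mul_zero, zero_div, zero_add, Nat.cast_add, Nat.cast_one] at h
  refine Eq.trans (sum_congr rfl fun ⟨m, j⟩ hmj ↦ ?_) h
  rw [HasAntidiagonal.mem_antidiagonal] at hmj
  subst hmj
  rw [neg_pow, treeCoeff]
  push_cast
  ring

noncomputable def treeTermExpansion (z : ℂ) (p : ℕ × ℕ) : ℂ :=
  treeCoeff p.1 * z ^ p.1 * ((-(p.1 + 1) * z) ^ p.2 / p.2 !)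

theorem hasSum_treeTermExpansion_right (z : ℂ) (m : ℕ) :
    HasSum (fun j ↦ treeTermExpansion z (m, j)) (treeTerm m z) := by
  have h := (NormedSpace.expSeries_div_hasSum_exp (-(m + 1) * z)).mul_left (treeCoeff m * z ^ m)
  rwa [← Complex.exp_eq_exp_ℂ] at h

theorem sum_antidiagonal_treeTermExpansion (z : ℂ) (n : ℕ) :
    ∑ p ∈ antidiagonal n, treeTermExpansion z p = z ^ n := by
  rw [← one_mul (z ^ n), ← sum_antidiagonal_treeCoeff n, sum_mul]
  refine sum_congr rfl fun ⟨m, j⟩ hmj ↦ ?_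
  rw [HasAntidiagonal.mem_antidiagonal] at hmj
  subst hmj
  rw [treeTermExpansion, mul_pow, neg_pow]
  ring

theorem norm_treeTermExpansion (z : ℂ) (m j : ℕ) :
    ‖treeTermExpansion z (m, j)‖ =
      treeCoeff m * ‖z‖ ^ m * (((m + 1) * ‖z‖) ^ j / j !) := by
  have hm : ‖(m + 1 : ℂ)‖ = m + 1 := by exact_mod_cast Complex.norm_natCast (m + 1)
  simp only [treeTermExpansion, norm_mul, norm_div, norm_pow, norm_neg, hm, Complex.norm_real,
    Complex.norm_natCast, Real.norm_of_nonneg (treeCoeff_nonneg m)]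

theorem summable_norm_treeTermExpansion {z : ℂ} (hz : ‖z‖ * Real.exp (1 + ‖z‖) < 1) :
    Summable fun p ↦ ‖treeTermExpansion z p‖ := by
  set r := ‖z‖
  refine (summable_prod_of_nonneg fun _ ↦ norm_nonneg _).mpr ⟨fun m ↦ ?_, ?_⟩
  · simp_rw [norm_treeTermExpansion]
    exact (Real.summable_pow_div_factorial _).mul_left _
  have hinner (m : ℕ) :
      ∑' j, ‖treeTermExpansion z (m, j)‖ = treeCoeff m * r ^ m * Real.exp ((m + 1) * r) := by
    simp_rw [norm_treeTermExpansion]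
    rw [tsum_mul_left, Real.exp_eq_exp_ℝ, (NormedSpace.expSeries_div_hasSum_exp _).tsum_eq]
  refine Summable.of_nonneg_of_le (fun m ↦ tsum_nonneg fun j ↦ norm_nonneg _) (fun m ↦ ?_)
    ((summable_geometric_of_lt_one (by positivity) hz).mul_left (Real.exp (1 + r)))
  have hexp :
      Real.exp (m + 1) * Real.exp ((m + 1) * r) = Real.exp (1 + r) * Real.exp (1 + r) ^ m := by
    rw [← Real.exp_nat_mul, ← Real.exp_add, ← Real.exp_add]
    ring_nf
  calc ∑' j, ‖treeTermExpansion z (m, j)‖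
      ≤ Real.exp (m + 1) * r ^ m * Real.exp ((m + 1) * r) := by
        rw [hinner]
        gcongr
        exact treeCoeff_le_exp m
    _ = Real.exp (1 + r) * (r * Real.exp (1 + r)) ^ m := by
        linear_combination r ^ m * hexp

theorem hasSum_treeTerm_of_norm_mul_exp_lt_one {z : ℂ}
    (hz : ‖z‖ * Real.exp (1 + ‖z‖) < 1) :
    HasSum (fun m ↦ treeTerm m z) (1 - z)⁻¹ := by
  have hz1 : ‖z‖ < 1 := by
    nlinarith [Real.add_one_le_exp (1 + ‖z‖), norm_nonneg z]
  obtain ⟨s, hs⟩ := (summable_norm_treeTermExpansion hz).of_norm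
  have hgeom : HasSum (fun n ↦ z ^ n) s := by
    simpa only [sum_antidiagonal_treeTermExpansion] using hs.sum_antidiagonal
  rw [(hasSum_geometric_of_norm_lt_one hz1).unique hgeom]
  exact hs.prod_fiberwise (hasSum_treeTermExpansion_right z)

/-- On this set `z ↦ z * exp (-z)` stays inside the disc of convergence `‖x‖ < exp (-1)`
of `∑ k ^ k / k! * x ^ k`; the condition `re z < 1` makes it star-shaped and excludes the
pole `1`. -/
def treeDomain : Set ℂ := {z | z.re < 1 ∧ ‖z * Complex.exp (-z)‖ < Real.exp (-1)}

theorem norm_mul_exp_neg (z : ℂ) : ‖z * Complex.exp (-z)‖ = ‖z‖ * Real.exp (-z.re) := by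
  rw [norm_mul, Complex.norm_exp, Complex.neg_re]

theorem continuous_norm_mul_exp_neg : Continuous fun z : ℂ ↦ ‖z * Complex.exp (-z)‖ := by
  fun_prop

theorem isOpen_treeDomain : IsOpen treeDomain :=
  (isOpen_lt Complex.continuous_re continuous_const).inter
    (isOpen_lt continuous_norm_mul_exp_neg continuous_const)

theorem ofReal_mem_treeDomain {t : ℝ} (h0 : 0 ≤ t) (h1 : t < 1) : (t : ℂ) ∈ treeDomain := by
  refine ⟨by simpa using h1, ?_⟩
  have ht : t < Real.exp (t - 1) := by
    linarith [Real.add_one_lt_exp (sub_ne_zero.mpr h1.ne)]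
  calc ‖(t : ℂ) * Complex.exp (-t)‖ = t * Real.exp (-t) := by
        rw [norm_mul_exp_neg, Complex.norm_real, Real.norm_of_nonneg h0, Complex.ofReal_re]
    _ < Real.exp (t - 1) * Real.exp (-t) := by gcongr
    _ = Real.exp (-1) := by rw [← Real.exp_add]; ring_nf

theorem starConvex_treeDomain : StarConvex ℝ 0 treeDomain := by
  refine starConvex_zero_iff.mpr fun z ⟨hre, hnorm⟩ b hb0 hb1 ↦ ?_
  have hre' : (b • z).re = b * z.re := by simp
  refine ⟨?_, lt_of_le_of_lt ?_ hnorm⟩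
  · rw [hre']
    rcases le_total z.re 0 with h | h <;> nlinarith
  have hb : b ≤ Real.exp ((b - 1) * z.re) := by
    calc b ≤ Real.exp (b - 1) := by linarith [Real.add_one_le_exp (b - 1)]
      _ ≤ Real.exp ((b - 1) * z.re) := by gcongr; nlinarith
  rw [norm_mul_exp_neg, norm_mul_exp_neg, hre', norm_smul, Real.norm_of_nonneg hb0]
  calc b * ‖z‖ * Real.exp (-(b * z.re))
      ≤ Real.exp ((b - 1) * z.re) * ‖z‖ * Real.exp (-(b * z.re)) := by gcongr
    _ = ‖z‖ * Real.exp (-z.re) := by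
      rw [mul_right_comm, ← Real.exp_add]
      ring_nf

theorem norm_treeTerm_le (m : ℕ) (z : ℂ) :
    ‖treeTerm m z‖ ≤ Real.exp (1 - z.re) * (Real.exp 1 * ‖z * Complex.exp (-z)‖) ^ m := by
  have hexp : ‖Complex.exp (-(m + 1) * z)‖ = Real.exp (-z.re) ^ m * Real.exp (-z.re) := by
    rw [Complex.norm_exp, ← pow_succ, ← Real.exp_nat_mul]
    congr 1
    simp only [neg_mul, Complex.neg_re, Complex.mul_re, Complex.add_re, Complex.natCast_re,
      Complex.one_re, Complex.add_im, Complex.natCast_im, Complex.one_im]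
    push_cast
    ring
  calc ‖treeTerm m z‖ = treeCoeff m * (‖z‖ * Real.exp (-z.re)) ^ m * Real.exp (-z.re) := by
        rw [treeTerm, norm_mul, norm_mul, hexp, Complex.norm_real,
          Real.norm_of_nonneg (treeCoeff_nonneg m), norm_pow]
        ring
    _ ≤ Real.exp (m + 1) * (‖z‖ * Real.exp (-z.re)) ^ m * Real.exp (-z.re) := by
        gcongr
        exact treeCoeff_le_exp m
    _ = Real.exp (1 - z.re) * (Real.exp 1 * ‖z * Complex.exp (-z)‖) ^ m := by
        rw [norm_mul_exp_neg, sub_eq_add_neg, Real.exp_add, Real.exp_add, ← Real.exp_one_pow]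
        ring

theorem exp_one_mul_lt_one {x : ℝ} (hx : x < Real.exp (-1)) : Real.exp 1 * x < 1 := by
  calc Real.exp 1 * x < Real.exp 1 * Real.exp (-1) := by gcongr
    _ = 1 := by rw [← Real.exp_add, add_neg_cancel, Real.exp_zero]

theorem summable_treeTerm {z : ℂ} (hz : z ∈ treeDomain) : Summable fun m ↦ treeTerm m z :=
  .of_norm_bounded ((summable_geometric_of_lt_one (by positivity)
    (exp_one_mul_lt_one hz.2)).mul_left _) (norm_treeTerm_le · z)

theorem analyticOnNhd_tsum_treeTerm :
    AnalyticOnNhd ℂ (fun z ↦ ∑' m, treeTerm m z) treeDomain := by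
  refine DifferentiableOn.analyticOnNhd (fun z₀ hz₀ ↦ ?_) isOpen_treeDomain
  obtain ⟨r, hz₀r, hr⟩ := exists_between hz₀.2
  set V := {w : ℂ | z₀.re - 1 < w.re ∧ ‖w * Complex.exp (-w)‖ < r}
  have hV : IsOpen V :=
    (isOpen_lt continuous_const Complex.continuous_re).inter
      (isOpen_lt continuous_norm_mul_exp_neg continuous_const)
  have hz₀V : z₀ ∈ V := ⟨by linarith, hz₀r⟩
  have hdiff : DifferentiableOn ℂ (fun z ↦ ∑' m, treeTerm m z) V := by
    refine Complex.differentiableOn_tsum_of_summable_norm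
      ((summable_geometric_of_lt_one (by have := (norm_nonneg _).trans hz₀r.le; positivity)
        (exp_one_mul_lt_one hr)).mul_left (Real.exp (2 - z₀.re))) (fun m ↦ ?_) hV
      fun m w ⟨hw_re, hw_norm⟩ ↦ ?_
    · unfold treeTerm
      fun_prop
    · refine (norm_treeTerm_le m w).trans ?_
      gcongr Real.exp ?_ * (_ * ?_) ^ _
      linarith
  exact (hdiff.differentiableAt (hV.mem_nhds hz₀V)).differentiableWithinAt

theorem hasSum_treeTerm {z : ℂ} (hz : z ∈ treeDomain) :
    HasSum (fun m ↦ treeTerm m z) (1 - z)⁻¹ := by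
  have hinv : AnalyticOnNhd ℂ (fun z ↦ (1 - z)⁻¹) treeDomain := fun w hw ↦
    (analyticAt_const.sub analyticAt_id).inv
      (sub_ne_zero.mpr (ne_of_apply_ne Complex.re hw.1.ne'))
  have hsmall : ∀ᶠ w in 𝓝 (0 : ℂ), ‖w‖ * Real.exp (1 + ‖w‖) < 1 :=
    (isOpen_lt (by fun_prop : Continuous fun w : ℂ ↦ ‖w‖ * Real.exp (1 + ‖w‖))
      continuous_const).mem_nhds (by simp)
  have h0 : (0 : ℂ) ∈ treeDomain := by simpa using ofReal_mem_treeDomain le_rfl one_pos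
  have heq := analyticOnNhd_tsum_treeTerm.eqOn_of_preconnected_of_eventuallyEq hinv
    (starConvex_treeDomain.isPathConnected h0).isConnected.isPreconnected h0
    (hsmall.mono fun w hw ↦ (hasSum_treeTerm_of_norm_mul_exp_lt_one hw).tsum_eq)
  exact (summable_treeTerm hz).hasSum_iff.mpr (heq hz)

theorem stmt_4 (t : ℝ) (h0 : 0 < t) (h1 : t < 1) :
    ∑' k : ℕ, (k : ℝ) ^ 2 * ((k : ℝ) ^ (k - 2) / (Nat.factorial k) * t ^ (k - 1)
      * Real.exp (-(k : ℝ) * t)) = 1 / (1 - t) := by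
  set u : ℕ → ℝ := fun k ↦ (k : ℝ) ^ 2 * ((k : ℝ) ^ (k - 2) / (Nat.factorial k) * t ^ (k - 1)
    * Real.exp (-(k : ℝ) * t))
  have hterm (m : ℕ) : (u (m + 1) : ℂ) = treeTerm m t := by
    rcases m with _ | m
    · simp [u, treeTerm, treeCoeff]
    · simp only [u, treeTerm, treeCoeff, show m + 1 + 1 - 2 = m by omega, Nat.add_sub_cancel]
      push_cast
      ring
  have hsum : HasSum (fun m ↦ u (m + 1)) (1 - t)⁻¹ := by
    rw [← Complex.hasSum_ofReal]
    push_cast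
    simpa only [hterm] using hasSum_treeTerm (ofReal_mem_treeDomain h0.le h1)
  have hu0 : u 0 = 0 := by simp [u]
  rw [one_div, ((hasSum_nat_add_iff' 1 (f := u)).mp
    (by simpa only [range_one, sum_singleton, hu0, sub_zero] using hsum)).tsum_eq]
end

section
/- Suppose s : (1,∞) → (0,1) is differentiable and satisfies (1 - t + s(t)·t)·s'(t) = p·s(t)·(1 - s(t)) with s(t) → 0 as t → 1⁺. Then q·∫₁^t s(τ) dτ = s(t)·t + ln(1 - s(t)) for all t > 1, where q = 1 - p. -/
open Real Set Filter MeasureTheory Topology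

/-! The potential `Φ(t) = s(t) t + log (1 - s(t))` satisfies
`Φ' = s - s' (1 - t + s t) / (1 - s)`, which the ODE turns into `(1 - p) s`.
Since `s → 0` at `1⁺`, also `Φ → 0` there, and the (improper at `1`) fundamental theorem
of calculus gives `(1 - p) ∫₁ᵗ s = Φ(t)`; the integral exists because `0 < s < 1`. -/

lemma intervalIntegrable_of_continuousOn_Ioo_of_norm_le {E : Type*} [NormedAddCommGroup E]
    {f : ℝ → E} {a b : ℝ} (C : ℝ) (hab : a ≤ b) (hf : ContinuousOn f (Ioo a b))
    (hC : ∀ x ∈ Ioo a b, ‖f x‖ ≤ C) : IntervalIntegrable f volume a b := by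
  rw [intervalIntegrable_iff_integrableOn_Ioo_of_le hab]
  exact .of_bound measure_Ioo_lt_top (hf.aestronglyMeasurable measurableSet_Ioo) C
    ((ae_restrict_iff' measurableSet_Ioo).2 (.of_forall hC))

lemma hasDerivAt_mul_id_add_log_one_sub {s : ℝ → ℝ} {s' p x : ℝ} (hs : HasDerivAt s s' x)
    (hs1 : s x < 1) (hode : (1 - x + s x * x) * s' = p * s x * (1 - s x)) :
    HasDerivAt (fun u => s u * u + log (1 - s u)) ((1 - p) * s x) x := by
  have hne : 1 - s x ≠ 0 := by linarith
  refine ((hs.mul (hasDerivAt_id x)).add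
    (((hasDerivAt_const x 1).sub hs).log hne)).congr_deriv ?_
  simp only [Pi.sub_apply, id]
  field_simp
  linear_combination -hode

lemma tendsto_mul_id_add_log_one_sub {s : ℝ → ℝ} {a : ℝ}
    (hs : Tendsto s (𝓝[>] a) (𝓝 0)) :
    Tendsto (fun u => s u * u + log (1 - s u)) (𝓝[>] a) (𝓝 0) := by
  have hid : Tendsto id (𝓝[>] a) (𝓝 a) := tendsto_nhdsWithin_of_tendsto_nhds tendsto_id
  have hlog : Tendsto (fun u => log (1 - s u)) (𝓝[>] a) (𝓝 (log (1 - 0))) :=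
    ((continuousAt_log (by norm_num)).tendsto.comp (tendsto_const_nhds.sub hs))
  simpa using (hs.mul hid).add hlog

theorem stmt_13_general (p : ℝ) (s : ℝ → ℝ)
    (hrange : ∀ t > 1, s t ∈ Set.Ioo (0:ℝ) 1)
    (hdiff : ∀ t > 1, DifferentiableAt ℝ s t)
    (hode : ∀ t > 1, (1 - t + s t * t) * deriv s t = p * s t * (1 - s t))
    (hlim : Filter.Tendsto s (nhdsWithin 1 (Set.Ioi 1)) (nhds 0)) :
    ∀ t > 1, (1 - p) * ∫ τ in (1:ℝ)..t, s τ = s t * t + Real.log (1 - s t) := by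
  intro t ht
  have hderiv : ∀ x > 1, HasDerivAt (fun u => s u * u + log (1 - s u)) ((1 - p) * s x) x :=
    fun x hx =>
      hasDerivAt_mul_id_add_log_one_sub (hdiff x hx).hasDerivAt (hrange x hx).2 (hode x hx)
  have hint : IntervalIntegrable s volume 1 t := by
    refine intervalIntegrable_of_continuousOn_Ioo_of_norm_le 1 ht.le
      (fun x hx => (hdiff x hx.1).continuousAt.continuousWithinAt) fun x hx => ?_
    rw [norm_of_nonneg (hrange x hx.1).1.le]
    exact (hrange x hx.1).2.le
  rw [← intervalIntegral.integral_const_mul,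
    intervalIntegral.integral_eq_sub_of_hasDerivAt_of_tendsto ht (fun x hx => hderiv x hx.1)
      (hint.const_mul _) (tendsto_mul_id_add_log_one_sub hlim)
      (hderiv t ht).continuousAt.continuousWithinAt, sub_zero]

theorem stmt_13 (p : ℝ) (hp0 : 0 ≤ p) (hp1 : p ≤ 1) (s : ℝ → ℝ)
    (hrange : ∀ t > 1, s t ∈ Set.Ioo (0:ℝ) 1)
    (hdiff : ∀ t > 1, DifferentiableAt ℝ s t)
    (hode : ∀ t > 1, (1 - t + s t * t) * deriv s t = p * s t * (1 - s t))
    (hlim : Filter.Tendsto s (nhdsWithin 1 (Set.Ioi 1)) (nhds 0)) :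
    ∀ t > 1, (1 - p) * ∫ τ in (1:ℝ)..t, s τ = s t * t + Real.log (1 - s t) :=
  stmt_13_general p s hrange hdiff hode hlim
end

section
/- Let g : (1,∞) → (0,1) satisfy g = 1 − e^{-gt}, and G(t) = ∫₁^t g(τ)dτ. Then G(t) = −ln(1−g(t)) − Li₂(g(t)), where Li₂(x) = Σ_{n≥1} x^n/n². -/
/-!
Solving `h = 1 - exp (-h τ)` for `τ` gives `τ = φ h := -log (1 - h) / h`, which is strictly
increasing from `(0, 1)` onto `(1, ∞)`; hence `g` is the inverse of `φ`. The change of variables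
`τ = φ h` turns `∫₁ᵗ g` into `∫₀^{g t} h φ'(h) dh`, and `h φ'(h) = 1 / (1 - h) - φ h` is the
derivative of `-log (1 - h) - Li₂ h` because `Li₂' = φ`. Substituting on the image
`φ '' (0, g t] = (1, t]` needs neither continuity of `g` nor a limit at `τ = 1`.
-/

open Real Set MeasureTheory

/-- `φ h = -h⁻¹ log (1 - h)`, the value of `τ` at which the giant component has mass `h`. -/
noncomputable def giantInv (x : ℝ) : ℝ := -log (1 - x) / x

noncomputable def dilog (x : ℝ) : ℝ := ∑' n : ℕ, x ^ (n + 1) / ((n : ℝ) + 1) ^ 2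

lemma log_one_sub_lt_neg {x : ℝ} (hx0 : x ≠ 0) (hx1 : x < 1) : log (1 - x) < -x := by
  rw [log_lt_iff_lt_exp (by linarith)]
  linarith [add_one_lt_exp (neg_ne_zero.2 hx0)]

lemma one_lt_giantInv {x : ℝ} (hx : x ∈ Ioo (0 : ℝ) 1) : 1 < giantInv x := by
  rw [giantInv, lt_div_iff₀ hx.1]
  linarith [log_one_sub_lt_neg hx.1.ne' hx.2]

lemma giantInv_lt_one_div_one_sub {x : ℝ} (hx : x ∈ Ioo (0 : ℝ) 1) :
    giantInv x < 1 / (1 - x) := by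
  have h1x : 0 < 1 - x := sub_pos.2 hx.2
  have hlog : -log (1 - x) < (1 - x)⁻¹ - 1 := by
    rw [← log_inv]
    exact log_lt_sub_one_of_pos (inv_pos.2 h1x) (by rw [Ne, inv_eq_one]; linarith [hx.1])
  rw [giantInv, div_lt_iff₀ hx.1]
  calc -log (1 - x) < (1 - x)⁻¹ - 1 := hlog
    _ = 1 / (1 - x) * x := by field_simp; ring

lemma hasDerivAt_giantInv {x : ℝ} (hx0 : x ≠ 0) (hx1 : x ≠ 1) :
    HasDerivAt giantInv ((1 / (1 - x) - giantInv x) / x) x := by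
  have h1x : 1 - x ≠ 0 := sub_ne_zero.2 hx1.symm
  refine ((((hasDerivAt_id' x).const_sub 1).log h1x).fun_neg.div (hasDerivAt_id' x)
    hx0).congr_deriv ?_
  rw [giantInv]
  field_simp

lemma strictMonoOn_giantInv : StrictMonoOn giantInv (Ioo 0 1) := by
  have hderiv : ∀ x ∈ Ioo (0 : ℝ) 1, HasDerivAt giantInv ((1 / (1 - x) - giantInv x) / x) x :=
    fun x hx => hasDerivAt_giantInv hx.1.ne' hx.2.ne
  refine strictMonoOn_of_hasDerivWithinAt_pos (f' := fun x => (1 / (1 - x) - giantInv x) / x)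
    (convex_Ioo 0 1)
    (fun x hx => (hderiv x hx).continuousAt.continuousWithinAt) ?_ ?_ <;>
    rw [interior_Ioo]
  · exact fun x hx => (hderiv x hx).hasDerivWithinAt
  · exact fun x hx => div_pos (sub_pos.2 (giantInv_lt_one_div_one_sub hx)) hx.1

lemma giantInv_eq_of_eq_one_sub_exp {x t : ℝ} (hx : x ≠ 0) (h : x = 1 - exp (-x * t)) :
    giantInv x = t := by
  rw [giantInv, show 1 - x = exp (-x * t) by linarith, log_exp]
  field_simp

lemma hasSum_pow_div_succ {x : ℝ} (hx0 : x ≠ 0) (hx : |x| < 1) :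
    HasSum (fun n : ℕ => x ^ n / ((n : ℝ) + 1)) (giantInv x) := by
  refine ((hasSum_pow_div_log_of_abs_lt_one hx).div_const x).congr_fun fun n => ?_
  field_simp
  ring

lemma hasDerivAt_dilog {x : ℝ} (hx : |x| < 1) :
    HasDerivAt dilog (∑' n : ℕ, x ^ n / ((n : ℝ) + 1)) x := by
  obtain ⟨r, hxr, hr⟩ := exists_between hx
  have hmem : ∀ {y : ℝ}, |y| < r → y ∈ Ioo (-r) r := fun hy => abs_lt.1 hy
  have hderiv (n : ℕ) (y : ℝ) :
      HasDerivAt (fun z => z ^ (n + 1) / ((n : ℝ) + 1) ^ 2) (y ^ n / ((n : ℝ) + 1)) y := by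
    refine ((hasDerivAt_pow (n + 1) y).div_const (((n : ℝ) + 1) ^ 2)).congr_deriv ?_
    push_cast
    field_simp
  have hbound (n : ℕ) (y : ℝ) (hy : y ∈ Ioo (-r) r) : ‖y ^ n / ((n : ℝ) + 1)‖ ≤ r ^ n :=
    calc ‖y ^ n / ((n : ℝ) + 1)‖ = |y| ^ n / ((n : ℝ) + 1) := by
          rw [norm_div, norm_pow, norm_eq_abs, norm_eq_abs,
            abs_of_pos (by positivity : (0 : ℝ) < n + 1)]
      _ ≤ |y| ^ n := div_le_self (by positivity) (by simp)
      _ ≤ r ^ n := pow_le_pow_left₀ (abs_nonneg y) (abs_lt.2 hy).le n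
  exact hasDerivAt_tsum_of_isPreconnected
    (summable_geometric_of_lt_one ((abs_nonneg x).trans hxr.le) hr) isOpen_Ioo
    (convex_Ioo (-r) r).isPreconnected (fun n y _ => hderiv n y) (fun n y hy => hbound n y hy)
    (hmem (y := 0) (by simpa using (abs_nonneg x).trans_lt hxr)) (by simp) (hmem hxr)

lemma hasDerivAt_neg_log_one_sub_sub_dilog {x : ℝ} (hx0 : x ≠ 0) (hx : |x| < 1) :
    HasDerivAt (fun y => -log (1 - y) - dilog y) (1 / (1 - x) - giantInv x) x := by
  have h1x : 1 - x ≠ 0 := by linarith [le_abs_self x]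
  rw [← (hasSum_pow_div_succ hx0 hx).tsum_eq]
  refine ((((hasDerivAt_id' x).const_sub 1).log h1x).fun_neg.sub
    (hasDerivAt_dilog hx)).congr_deriv ?_
  ring

lemma continuousOn_neg_log_one_sub_sub_dilog :
    ContinuousOn (fun y => -log (1 - y) - dilog y) (Ioo (-1) 1) := fun x hx =>
  have h1x : 1 - x ≠ 0 := by linarith [hx.2]
  ((continuousAt_log h1x).comp (continuousAt_const.sub continuousAt_id)).neg.sub
    (hasDerivAt_dilog (abs_lt.2 hx)).continuousAt |>.continuousWithinAt

lemma setIntegral_Ioc_one_div_one_sub_sub_giantInv {b : ℝ} (hb : b ∈ Ioo (0 : ℝ) 1) :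
    ∫ x in Ioc 0 b, (1 / (1 - x) - giantInv x) = -log (1 - b) - dilog b := by
  have hsub : Icc 0 b ⊆ Ioo (-1) 1 := Icc_subset_Ioo (by norm_num) hb.2
  have hcont := continuousOn_neg_log_one_sub_sub_dilog.mono hsub
  have hderiv : ∀ x ∈ Ioo 0 b, HasDerivAt (fun y => -log (1 - y) - dilog y)
      (1 / (1 - x) - giantInv x) x := fun x hx =>
    hasDerivAt_neg_log_one_sub_sub_dilog hx.1.ne' (abs_lt.2 (hsub (Ioo_subset_Icc_self hx)))
  have hint : IntegrableOn (fun x => 1 / (1 - x) - giantInv x) (Ioc 0 b) :=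
    intervalIntegral.integrableOn_deriv_of_nonneg hcont hderiv fun x hx =>
      (sub_pos.2 (giantInv_lt_one_div_one_sub ⟨hx.1, hx.2.trans hb.2⟩)).le
  rw [← intervalIntegral.integral_of_le hb.1.le,
    intervalIntegral.integral_eq_sub_of_hasDerivAt_of_le hb.1.le hcont hderiv
      ((intervalIntegrable_iff_integrableOn_Ioc_of_le hb.1.le).2 hint)]
  simp [dilog]

lemma giantInv_image_Ioc {g : ℝ → ℝ} (hrange : ∀ t > 1, g t ∈ Ioo (0 : ℝ) 1)
    (hinv : ∀ t > 1, giantInv (g t) = t) {t : ℝ} (ht : 1 < t) :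
    giantInv '' Ioc 0 (g t) = Ioc 1 t := by
  ext y
  constructor
  · rintro ⟨x, hx, rfl⟩
    have hx' : x ∈ Ioo (0 : ℝ) 1 := ⟨hx.1, hx.2.trans_lt (hrange t ht).2⟩
    refine ⟨one_lt_giantInv hx', ?_⟩
    simpa only [hinv t ht] using strictMonoOn_giantInv.monotoneOn hx' (hrange t ht) hx.2
  · rintro ⟨hy, hyt⟩
    refine ⟨g y, ⟨(hrange y hy).1, ?_⟩, hinv y hy⟩
    rwa [← strictMonoOn_giantInv.le_iff_le (hrange y hy) (hrange t ht), hinv y hy, hinv t ht]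

theorem stmt_17 (g : ℝ → ℝ)
    (hrange : ∀ t > 1, g t ∈ Set.Ioo (0:ℝ) 1)
    (himp : ∀ t > 1, g t = 1 - Real.exp (-(g t) * t)) :
    ∀ t > 1, ∫ τ in (1:ℝ)..t, g τ =
      -Real.log (1 - g t) - ∑' n : ℕ, (g t) ^ (n + 1) / ((n : ℝ) + 1) ^ 2 := by
  intro t ht
  change ∫ τ in (1 : ℝ)..t, g τ = -log (1 - g t) - dilog (g t)
  have hinv : ∀ s > 1, giantInv (g s) = s := fun s hs =>
    giantInv_eq_of_eq_one_sub_exp (hrange s hs).1.ne' (himp s hs)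
  have hg_giantInv : ∀ x ∈ Ioo (0 : ℝ) 1, g (giantInv x) = x := fun x hx =>
    strictMonoOn_giantInv.injOn (hrange _ (one_lt_giantInv hx)) hx (hinv _ (one_lt_giantInv hx))
  have hsub : Ioc 0 (g t) ⊆ Ioo 0 1 := fun x hx => ⟨hx.1, hx.2.trans_lt (hrange t ht).2⟩
  rw [intervalIntegral.integral_of_le ht.le, ← giantInv_image_Ioc hrange hinv ht,
    integral_image_eq_integral_abs_deriv_smul measurableSet_Ioc
      (fun x hx => (hasDerivAt_giantInv (hsub hx).1.ne' (hsub hx).2.ne).hasDerivWithinAt)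
      (strictMonoOn_giantInv.injOn.mono hsub),
    ← setIntegral_Ioc_one_div_one_sub_sub_giantInv (hrange t ht)]
  refine setIntegral_congr_fun measurableSet_Ioc fun x hx => ?_
  have hx := hsub hx
  rw [hg_giantInv x hx, smul_eq_mul, abs_div, abs_of_pos hx.1,
    abs_of_pos (sub_pos.2 (giantInv_lt_one_div_one_sub hx)), div_mul_cancel₀ _ hx.1.ne']
end

section
/- For N ≥ 1, the probability (N−1)!/N^N · Σ_{n=0}^{N−1} N^n/n! is asymptotic to √(π/(2N)) as N → ∞. -/
/-!
Reversing the order of summation turns the quantity into `Q(N) / N`, where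
`Q(N) = ∑_{k<N} ∏_{j=1}^{k} (1 - j/N)` is Ramanujan's Q-function. The `k`-th product behaves
like `exp (-k²/(2N))`: it is at most this by `1 - x ≤ exp (-x)`, and for `k < m ≤ N/2` at least
`exp (-(k+1)²/(2N) - 2m³/N²)` by `1 - x ≥ exp (-x - 2x²)`. Comparing the sums with integrals of
the Gaussian gives `Q(N) = √N (√(π/2) + o(1))` as soon as the cutoff satisfies
`√N ≪ m ≪ N^(2/3)`; we take `m = ⌈N^(3/5)⌉`.
-/

open Real Filter Finset Topology MeasureTheory

theorem prod_one_sub_le_exp_neg_sum {ι : Type*} (s : Finset ι) {x : ι → ℝ}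
    (hx : ∀ i ∈ s, x i ≤ 1) : ∏ i ∈ s, (1 - x i) ≤ exp (-∑ i ∈ s, x i) := by
  rw [← sum_neg_distrib, exp_sum]
  exact prod_le_prod (fun i hi => by linarith [hx i hi])
    (fun i _ => by linarith [add_one_le_exp (-x i)])

theorem exp_neg_add_two_mul_sq_le_one_sub {x : ℝ} (hx : x ≤ 1 / 2) :
    exp (-(x + 2 * x ^ 2)) ≤ 1 - x := by
  have hpos : 0 < 1 - x := by linarith
  rw [← exp_log hpos, exp_le_exp]
  refine le_trans ?_ (one_sub_inv_le_log_of_pos hpos)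
  rw [neg_le_sub_iff_le_add, inv_le_iff_one_le_mul₀ hpos]
  nlinarith [mul_nonneg (sq_nonneg x) (by linarith : 0 ≤ 1 - 2 * x)]

theorem exp_neg_sum_le_prod_one_sub {ι : Type*} (s : Finset ι) {x : ι → ℝ}
    (hx : ∀ i ∈ s, x i ≤ 1 / 2) :
    exp (-∑ i ∈ s, (x i + 2 * x i ^ 2)) ≤ ∏ i ∈ s, (1 - x i) := by
  rw [← sum_neg_distrib, exp_sum]
  exact prod_le_prod (fun i _ => (exp_pos _).le)
    (fun i hi => exp_neg_add_two_mul_sq_le_one_sub (hx i hi))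

theorem sum_range_natCast_add_one (k : ℕ) :
    ∑ j ∈ range k, ((j : ℝ) + 1) = k * (k + 1) / 2 := by
  induction k with
  | zero => simp
  | succ k ih => rw [sum_range_succ, ih]; push_cast; ring

theorem AntitoneOn.sum_range_succ_le_add_integral {f : ℝ → ℝ} (hf : AntitoneOn f (Set.Ici 0))
    (n : ℕ) : ∑ k ∈ range (n + 1), f k ≤ f 0 + ∫ x in (0 : ℝ)..n, f x := by
  have h := (hf.mono Set.Icc_subset_Ici_self).sum_le_integral (x₀ := 0) (a := n)
  simp only [zero_add, Nat.cast_add, Nat.cast_one] at h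
  rw [sum_range_succ', add_comm]
  push_cast
  simpa using h

theorem AntitoneOn.integral_sub_le_sum_range_succ {f : ℝ → ℝ} (hf : AntitoneOn f (Set.Ici 0))
    {n : ℕ} (hn : 0 ≤ f n) : (∫ x in (0 : ℝ)..n, f x) - f 0 ≤ ∑ k ∈ range n, f (k + 1) := by
  have h := (hf.mono Set.Icc_subset_Ici_self).integral_le_sum (x₀ := 0) (a := n)
  simp only [zero_add] at h
  have hshift := (sum_range_succ (fun k : ℕ => f k) n).symm.trans (sum_range_succ' _ n)
  push_cast at hshift
  linarith

theorem antitoneOn_exp_neg_sq_div {c : ℝ} (hc : 0 ≤ c) :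
    AntitoneOn (fun x : ℝ => exp (-(x / c) ^ 2 / 2)) (Set.Ici 0) := by
  intro x hx y _ hxy
  simp only [exp_le_exp]
  have : (x / c) ^ 2 ≤ (y / c) ^ 2 := by gcongr; exact div_nonneg hx hc
  linarith

theorem integral_exp_neg_div_sq_half {c : ℝ} (hc : c ≠ 0) (a : ℝ) :
    ∫ x in (0 : ℝ)..a, exp (-(x / c) ^ 2 / 2) = c * ∫ u in (0 : ℝ)..a / c, exp (-u ^ 2 / 2) := by
  simpa using intervalIntegral.integral_comp_div (fun u => exp (-u ^ 2 / 2)) hc (a := 0) (b := a)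

theorem integral_Ioi_exp_neg_sq_half : ∫ u in Set.Ioi (0 : ℝ), exp (-u ^ 2 / 2) = √(π / 2) := by
  have h := integral_gaussian_Ioi (1 / 2)
  rw [show π / (1 / 2) = π / 2 * 2 ^ 2 by ring, sqrt_mul (by positivity),
    sqrt_sq (by norm_num), mul_div_cancel_right₀ _ two_ne_zero] at h
  simpa [neg_div, div_eq_inv_mul] using h

theorem integrableOn_exp_neg_sq_half :
    IntegrableOn (fun u : ℝ => exp (-u ^ 2 / 2)) (Set.Ioi 0) := by
  simpa [neg_div, div_eq_inv_mul] using
    (integrable_exp_neg_mul_sq (by norm_num : (0 : ℝ) < 1 / 2)).integrableOn (s := Set.Ioi 0)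

theorem integral_exp_neg_sq_half_le {t : ℝ} (ht : 0 ≤ t) :
    ∫ u in (0 : ℝ)..t, exp (-u ^ 2 / 2) ≤ √(π / 2) := by
  rw [intervalIntegral.integral_of_le ht, ← integral_Ioi_exp_neg_sq_half]
  exact setIntegral_mono_set integrableOn_exp_neg_sq_half
    (.of_forall fun _ => (exp_pos _).le) Set.Ioc_subset_Ioi_self.eventuallyLE

theorem tendsto_integral_exp_neg_sq_half :
    Tendsto (fun t => ∫ u in (0 : ℝ)..t, exp (-u ^ 2 / 2)) atTop (𝓝 √(π / 2)) := by
  rw [← integral_Ioi_exp_neg_sq_half]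
  exact intervalIntegral_tendsto_integral_Ioi 0 integrableOn_exp_neg_sq_half tendsto_id

noncomputable def ramanujanQ (N : ℕ) : ℝ :=
  ∑ k ∈ range N, ∏ j ∈ range k, (1 - ((j : ℝ) + 1) / N)

theorem prod_one_sub_div_eq_descFactorial {N k : ℕ} (hk : k < N) :
    ∏ j ∈ range k, (1 - ((j : ℝ) + 1) / N) = ((N - 1).descFactorial k : ℝ) / (N : ℝ) ^ k := by
  have hN : (N : ℝ) ≠ 0 := Nat.cast_ne_zero.2 (by omega)
  have hfactor : ∀ j ∈ range k, 1 - ((j : ℝ) + 1) / N = ((N - 1 - j : ℕ) : ℝ) / N := by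
    intro j hj
    have hj : j + 1 ≤ N := by have := mem_range.mp hj; omega
    rw [Nat.cast_sub (by omega), Nat.cast_sub (by omega)]
    field_simp
    push_cast
    ring
  rw [prod_congr rfl hfactor, prod_div_distrib, prod_const, card_range,
    Nat.descFactorial_eq_prod_range, Nat.cast_prod]

theorem factorial_div_pow_mul_sum_eq_ramanujanQ_div {N : ℕ} (hN : 0 < N) :
    ((N - 1).factorial : ℝ) / (N : ℝ) ^ N * ∑ n ∈ range N, (N : ℝ) ^ n / n.factorial =
      ramanujanQ N / N := by
  rw [mul_sum, ← sum_range_reflect, ramanujanQ, sum_div]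
  refine sum_congr rfl fun k hk => ?_
  have hk : k < N := mem_range.mp hk
  have hfac : ((N - 1 - k).factorial : ℝ) * (N - 1).descFactorial k = (N - 1).factorial := by
    exact_mod_cast Nat.factorial_mul_descFactorial (by omega)
  have hpow : (N : ℝ) ^ N = (N : ℝ) ^ (N - 1 - k) * (N : ℝ) ^ k * N := by
    rw [← pow_add, ← pow_succ]; congr 1; omega
  rw [prod_one_sub_div_eq_descFactorial hk, ← hfac, hpow]
  field_simp

theorem ramanujanQ_term_le {N k : ℕ} (hk : k < N) :
    ∏ j ∈ range k, (1 - ((j : ℝ) + 1) / N) ≤ exp (-(k / √N) ^ 2 / 2) := by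
  have hN : (0 : ℝ) < N := by exact_mod_cast (k.zero_le.trans_lt hk)
  refine (prod_one_sub_le_exp_neg_sum _ fun j hj => ?_).trans (exp_le_exp.2 ?_)
  · rw [div_le_one hN]
    exact_mod_cast (mem_range.1 hj).trans hk
  · rw [← sum_div, sum_range_natCast_add_one, div_pow, sq_sqrt hN.le]
    have : (k : ℝ) ^ 2 / N / 2 ≤ k * (k + 1) / 2 / N := by
      rw [div_div, div_div, mul_comm (N : ℝ)]
      gcongr
      nlinarith
    linarith

theorem exp_mul_exp_le_ramanujanQ_term {N m k : ℕ} (hk : k < m) (hm : 2 * m ≤ N) :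
    exp (-(2 * m ^ 3 / N ^ 2)) * exp (-((k + 1) / √N) ^ 2 / 2) ≤
      ∏ j ∈ range k, (1 - ((j : ℝ) + 1) / N) := by
  have hN : (0 : ℝ) < N := by exact_mod_cast (show 0 < N by omega)
  have hkm : (k : ℝ) + 1 ≤ m := by exact_mod_cast hk
  have hsq : ∑ j ∈ range k, 2 * (((j : ℝ) + 1) / N) ^ 2 ≤ 2 * (m : ℝ) ^ 3 / N ^ 2 :=
    calc ∑ j ∈ range k, 2 * (((j : ℝ) + 1) / N) ^ 2
        ≤ ∑ _j ∈ range k, 2 * ((m : ℝ) / N) ^ 2 := by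
          refine sum_le_sum fun j hj => ?_
          have : (j : ℝ) + 1 ≤ m := by exact_mod_cast (mem_range.1 hj).trans hk
          gcongr
      _ ≤ 2 * (m : ℝ) ^ 3 / N ^ 2 := by
          rw [sum_const, card_range, nsmul_eq_mul, div_pow]
          have : (k : ℝ) ≤ m := by linarith
          calc (k : ℝ) * (2 * (m ^ 2 / N ^ 2)) ≤ m * (2 * (m ^ 2 / N ^ 2)) := by gcongr
            _ = 2 * (m : ℝ) ^ 3 / N ^ 2 := by ring
  refine le_trans ?_ (exp_neg_sum_le_prod_one_sub _ fun j hj => ?_)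
  · rw [← exp_add, exp_le_exp, sum_add_distrib, ← sum_div, sum_range_natCast_add_one, div_pow,
      sq_sqrt hN.le]
    have : (k : ℝ) * (k + 1) / 2 / N ≤ (k + 1) ^ 2 / N / 2 := by
      rw [div_div, div_div, mul_comm (N : ℝ)]
      gcongr
      nlinarith
    linarith
  · rw [div_le_iff₀ hN]
    have : 2 * (j + 1) ≤ N := by have := mem_range.1 hj; omega
    have : (2 : ℝ) * (j + 1) ≤ N := by exact_mod_cast this
    linarith

theorem ramanujanQ_le {N : ℕ} (hN : 0 < N) : ramanujanQ N ≤ 1 + √N * √(π / 2) := by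
  set g : ℝ → ℝ := fun x => exp (-(x / √N) ^ 2 / 2)
  have hsum := (antitoneOn_exp_neg_sq_div (sqrt_nonneg N)).sum_range_succ_le_add_integral (N - 1)
  rw [Nat.sub_add_cancel hN] at hsum
  calc ramanujanQ N ≤ ∑ k ∈ range N, g k :=
        sum_le_sum fun k hk => ramanujanQ_term_le (mem_range.1 hk)
    _ ≤ g 0 + ∫ x in (0 : ℝ)..(N - 1 : ℕ), g x := hsum
    _ = 1 + √N * ∫ u in (0 : ℝ)..(N - 1 : ℕ) / √N, exp (-u ^ 2 / 2) := by
        simp only [g, integral_exp_neg_div_sq_half (by positivity : √(N : ℝ) ≠ 0)]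
        simp
    _ ≤ 1 + √N * √(π / 2) := by
        gcongr
        exact integral_exp_neg_sq_half_le (by positivity)

theorem ramanujanQ_ge {N m : ℕ} (hN : 0 < N) (hm : 2 * m ≤ N) :
    exp (-(2 * m ^ 3 / N ^ 2)) * ((√N * ∫ u in (0 : ℝ)..m / √N, exp (-u ^ 2 / 2)) - 1) ≤
      ramanujanQ N := by
  set g : ℝ → ℝ := fun x => exp (-(x / √N) ^ 2 / 2)
  calc exp (-(2 * m ^ 3 / N ^ 2)) * ((√N * ∫ u in (0 : ℝ)..m / √N, exp (-u ^ 2 / 2)) - 1)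
      = exp (-(2 * m ^ 3 / N ^ 2)) * ((∫ x in (0 : ℝ)..m, g x) - g 0) := by
        simp only [g, integral_exp_neg_div_sq_half (by positivity : √(N : ℝ) ≠ 0)]
        simp
    _ ≤ exp (-(2 * m ^ 3 / N ^ 2)) * ∑ k ∈ range m, g (k + 1) := by
        gcongr
        exact (antitoneOn_exp_neg_sq_div (sqrt_nonneg _)).integral_sub_le_sum_range_succ
          (exp_pos _).le
    _ ≤ ∑ k ∈ range m, ∏ j ∈ range k, (1 - ((j : ℝ) + 1) / N) := by
        rw [mul_sum]
        exact sum_le_sum fun k hk => exp_mul_exp_le_ramanujanQ_term (mem_range.1 hk) hm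
    _ ≤ ramanujanQ N := by
        refine sum_le_sum_of_subset_of_nonneg (range_subset_range.2 (by omega)) fun k hk _ => ?_
        rw [prod_one_sub_div_eq_descFactorial (mem_range.1 hk)]
        positivity

theorem tendsto_ramanujanQ_div_sqrt_of_cutoff {m : ℕ → ℕ}
    (hm : Tendsto (fun N => (m N : ℝ) / √N) atTop atTop)
    (hm₃ : Tendsto (fun N => (m N : ℝ) ^ 3 / N ^ 2) atTop (𝓝 0)) :
    Tendsto (fun N => ramanujanQ N / √N) atTop (𝓝 √(π / 2)) := by
  have hinv : Tendsto (fun N : ℕ => (√N)⁻¹) atTop (𝓝 0) :=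
    tendsto_inv_atTop_zero.comp (tendsto_sqrt_atTop.comp tendsto_natCast_atTop_atTop)
  have hδ : Tendsto (fun N => 2 * (m N : ℝ) ^ 3 / N ^ 2) atTop (𝓝 0) := by
    simpa [mul_div_assoc] using hm₃.const_mul 2
  have hlower : Tendsto (fun N => exp (-(2 * (m N : ℝ) ^ 3 / N ^ 2)) *
      ((∫ u in (0 : ℝ)..m N / √N, exp (-u ^ 2 / 2)) - (√N)⁻¹)) atTop (𝓝 √(π / 2)) := by
    simpa using ((continuous_exp.tendsto _).comp hδ.neg).mul
      ((tendsto_integral_exp_neg_sq_half.comp hm).sub hinv)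
  have hupper : Tendsto (fun N : ℕ => (√N)⁻¹ + √(π / 2)) atTop (𝓝 √(π / 2)) := by
    simpa using hinv.add_const (√(π / 2))
  have hcut : ∀ᶠ N in atTop, 2 * m N ≤ N := by
    filter_upwards [hm₃.eventually (gt_mem_nhds (by norm_num : (0 : ℝ) < 1 / 8)),
      eventually_ge_atTop 1] with N hsmall hN
    have hN : (1 : ℝ) ≤ N := by exact_mod_cast hN
    rw [div_lt_iff₀ (by positivity)] at hsmall
    have hcube : ((2 * m N : ℕ) : ℝ) ^ 3 < (N : ℝ) ^ 3 := by
      push_cast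
      nlinarith [pow_le_pow_right₀ hN (by norm_num : 2 ≤ 3)]
    exact_mod_cast (lt_of_pow_lt_pow_left₀ 3 (by positivity) hcube).le
  refine tendsto_of_tendsto_of_tendsto_of_le_of_le' hlower hupper ?_ ?_
  · filter_upwards [hcut, eventually_gt_atTop 0] with N hcutN hN
    have hsN : 0 < √(N : ℝ) := by positivity
    rw [le_div_iff₀ hsN]
    refine (le_of_eq ?_).trans (ramanujanQ_ge hN hcutN)
    field_simp
  · filter_upwards [eventually_gt_atTop 0] with N hN
    have hsN : 0 < √(N : ℝ) := by positivity
    rw [div_le_iff₀ hsN, add_mul, inv_mul_cancel₀ hsN.ne', mul_comm]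
    exact ramanujanQ_le hN

theorem tendsto_ramanujanQ_div_sqrt :
    Tendsto (fun N => ramanujanQ N / √N) atTop (𝓝 √(π / 2)) := by
  refine tendsto_ramanujanQ_div_sqrt_of_cutoff (m := fun N => ⌈(N : ℝ) ^ (3 / 5 : ℝ)⌉₊) ?_ ?_
  · refine tendsto_atTop_mono' _ ?_
      ((tendsto_rpow_atTop (by norm_num : (0 : ℝ) < 1 / 10)).comp tendsto_natCast_atTop_atTop)
    filter_upwards [eventually_gt_atTop 0] with N hN
    have hN : (0 : ℝ) < N := by exact_mod_cast hN
    rw [Function.comp_apply, le_div_iff₀ (by positivity), sqrt_eq_rpow, ← rpow_add hN]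
    norm_num
    exact Nat.le_ceil _
  · have hlim : Tendsto (fun N : ℕ => 8 * (N : ℝ) ^ (-(1 / 5) : ℝ)) atTop (𝓝 0) := by
      simpa using ((tendsto_rpow_neg_atTop (by norm_num : (0 : ℝ) < 1 / 5)).comp
        tendsto_natCast_atTop_atTop).const_mul 8
    refine squeeze_zero' (.of_forall fun N => by positivity) ?_ hlim
    filter_upwards [eventually_ge_atTop 1] with N hN
    have hN : (1 : ℝ) ≤ N := by exact_mod_cast hN
    have hpow : 1 ≤ (N : ℝ) ^ (3 / 5 : ℝ) := one_le_rpow hN (by norm_num)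
    have hceil : (⌈(N : ℝ) ^ (3 / 5 : ℝ)⌉₊ : ℝ) ≤ 2 * (N : ℝ) ^ (3 / 5 : ℝ) := by
      linarith [Nat.ceil_lt_add_one (by positivity : 0 ≤ (N : ℝ) ^ (3 / 5 : ℝ))]
    have hexp : ((N : ℝ) ^ (3 / 5 : ℝ)) ^ 3 = (N : ℝ) ^ (-(1 / 5) : ℝ) * (N : ℝ) ^ 2 := by
      rw [← rpow_natCast, ← rpow_mul (by positivity), ← rpow_natCast (N : ℝ) 2,
        ← rpow_add (by positivity)]
      norm_num
    rw [div_le_iff₀ (by positivity), mul_assoc, ← hexp]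
    calc (⌈(N : ℝ) ^ (3 / 5 : ℝ)⌉₊ : ℝ) ^ 3 ≤ (2 * (N : ℝ) ^ (3 / 5 : ℝ)) ^ 3 := by gcongr
      _ = 8 * ((N : ℝ) ^ (3 / 5 : ℝ)) ^ 3 := by ring

theorem stmt_19 :
    Filter.Tendsto
      (fun N : ℕ =>
        ((Nat.factorial (N - 1) : ℝ) / (N : ℝ) ^ N *
            ∑ n ∈ Finset.range N, (N : ℝ) ^ n / (Nat.factorial n)) /
          Real.sqrt (Real.pi / (2 * N)))
      Filter.atTop (nhds 1) := by
  have hπ : √(π / 2) ≠ 0 := by positivity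
  refine (div_self hπ ▸ tendsto_ramanujanQ_div_sqrt.div_const (√(π / 2))).congr' ?_
  filter_upwards [eventually_gt_atTop 0] with N hN
  rw [factorial_div_pow_mul_sum_eq_ramanujanQ_div hN, ← div_div, sqrt_div' _ (Nat.cast_nonneg N)]
  field_simp
  rw [sq_sqrt (Nat.cast_nonneg N)]
end
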